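/- arXiv:math/0604471 — 2 statements merged into one kernel-verified Lean document; each statement's English description precedes it below -/
import Mathlib

section
/- Let n ≥ 1, k ≥ 2 and j ≥ 1 be integers with n + j ≤ kn, and let f be a path in 𝒫_{n,k,j}. Let s be the cardinality of the orbit of f under the operation 'rotate left k units' (cyclic left-rotation by k steps). Then s divides n, and n/s divides j. -/
/-- A path in 𝒫_{n,k,j}: a function `f : Fin (k*n) → ℤ` with all values in {1, −1}
and exactly `n+j` values equal to 1. -/
def IsPathPJ (n k j : ℕ) (f : Fin (k * n) → ℤ) : Prop :=
  (∀ t, f t = 1 ∨ f t = -1) ∧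
    (Finset.univ.filter (fun t : Fin (k * n) => f t = 1)).card = n + j

/-- Cyclic left-rotation of `f : Fin N → ℤ` by `r` steps: `t ↦ f((t + r) mod N)`. -/
def rotL {N : ℕ} (r : ℕ) (f : Fin N → ℤ) : Fin N → ℤ :=
  fun t => f ⟨((t : ℕ) + r) % N, Nat.mod_lt _ t.pos⟩

/-!
Rotating a path of length `kn` by `k` steps `n` times is the identity, so the orbit size `s` is
the minimal period of `f` under this rotation and divides `n`. Then `f` is invariant under rotation
by `ks`, i.e. it is the concatenation of `n / s` copies of its first `ks` steps; counting upsteps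
gives `n / s ∣ n + j`, hence `n / s ∣ j`.
-/

open Finset Function

theorem Function.card_range_iterate {α : Type*} {F : α → α} {x : α} (hx : x ∈ periodicPts F) :
    Nat.card (Set.range fun m => F^[m] x) = minimalPeriod F x := by
  have hrange :
      Set.range (fun m => F^[m] x) = (fun m => F^[m] x) '' Set.Iio (minimalPeriod F x) := by
    refine (Set.image_subset_range _ _).antisymm' ?_
    rintro _ ⟨m, rfl⟩
    exact ⟨m % minimalPeriod F x, Nat.mod_lt _ (minimalPeriod_pos_of_mem_periodicPts hx),
      iterate_mod_minimalPeriod_eq⟩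
  rw [Nat.card_coe_set_eq, hrange, iterate_injOn_Iio_minimalPeriod.ncard_image, ← coe_range,
    Set.ncard_coe_finset, card_range]

theorem Nat.count_mul_of_periodic {p : ℕ → Prop} [DecidablePred p] {a : ℕ} (hp : Periodic p a)
    (q : ℕ) : count p (q * a) = q * count p a := by
  induction q with
  | zero => simp
  | succ q ih =>
    have hshift : ∀ k, p (q * a + k) ↔ p k := fun k => by
      rw [add_comm]; simpa using (hp.nat_mul q k).to_iff
    simp_rw [succ_mul, count_add, ih, hshift]

theorem Fin.card_filter_univ_eq_count (N : ℕ) (p : ℕ → Prop) [DecidablePred p] :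
    #{t : Fin N | p t} = Nat.count p N := by
  rw [Nat.count_eq_card_filter_range, ← Nat.Iio_eq_range, ← Fin.map_valEmbedding_univ, filter_map,
    card_map]
  rfl

section rotL

variable {N : ℕ}

theorem rotL_rotL (a b : ℕ) (f : Fin N → ℤ) : rotL a (rotL b f) = rotL (a + b) f := by
  funext t
  simp only [rotL, Nat.mod_add_mod, add_assoc]

theorem iterate_rotL (r m : ℕ) (f : Fin N → ℤ) : (rotL r)^[m] f = rotL (r * m) f := by
  induction m with
  | zero => funext t; simp [rotL, Nat.mod_eq_of_lt t.isLt]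
  | succ m ih => rw [iterate_succ_apply', ih, rotL_rotL, Nat.mul_succ, add_comm]

theorem rotL_self (f : Fin N → ℤ) : rotL N f = f := by
  funext t
  simp [rotL, Nat.mod_eq_of_lt t.isLt]

theorem periodic_of_rotL_eq [NeZero N] {f : Fin N → ℤ} {r : ℕ} (h : rotL r f = f) :
    Periodic (fun u => f (Fin.ofNat N u)) r := fun u => by
  show f _ = f _
  rw [← congrFun h (Fin.ofNat N u)]
  simp only [rotL, Fin.val_ofNat, Nat.mod_add_mod]
  rfl

theorem card_filter_dvd_of_rotL_eq [NeZero N] {f : Fin N → ℤ} {r : ℕ} (hr : r ∣ N)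
    (h : rotL r f = f) (P : ℤ → Prop) [DecidablePred P] : N / r ∣ #{t | P (f t)} := by
  have hcount : #{t | P (f t)} = Nat.count (fun u => P (f (Fin.ofNat N u))) N := by
    rw [← Fin.card_filter_univ_eq_count]
    simp only [Fin.ofNat_eq_cast, Fin.cast_val_eq_self]
  have hmul := Nat.count_mul_of_periodic (p := fun u => P (f (Fin.ofNat N u)))
    ((periodic_of_rotL_eq h).comp P) (N / r)
  rw [Nat.div_mul_cancel hr] at hmul
  rw [hcount, hmul]
  exact dvd_mul_right _ _

end rotL

theorem stmt_7_general (n k j : ℕ) (hn : 1 ≤ n) (hk : 2 ≤ k)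
    (f : Fin (k * n) → ℤ) (hf : IsPathPJ n k j f)
    (s : ℕ) (hs : s = Nat.card {g : Fin (k * n) → ℤ // ∃ m : ℕ, (rotL k)^[m] f = g}) :
    s ∣ n ∧ (n / s) ∣ j := by
  have : NeZero (k * n) := ⟨Nat.mul_ne_zero (by omega) (by omega)⟩
  have hper : IsPeriodicPt (rotL k) n f := by
    rw [IsPeriodicPt, IsFixedPt, iterate_rotL, rotL_self]
  change s = Nat.card (Set.range fun m => (rotL k)^[m] f) at hs
  rw [card_range_iterate (mk_mem_periodicPts hn hper)] at hs
  subst hs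
  have hsn : minimalPeriod (rotL k) f ∣ n := hper.minimalPeriod_dvd
  have hfix : rotL (k * minimalPeriod (rotL k) f) f = f := by
    rw [← iterate_rotL]; exact isPeriodicPt_minimalPeriod _ _
  have hdvd := card_filter_dvd_of_rotL_eq (mul_dvd_mul_left k hsn) hfix (· = 1)
  rw [hf.2, Nat.mul_div_mul_left _ _ (by omega)] at hdvd
  exact ⟨hsn, (Nat.dvd_add_right (Nat.div_dvd_of_dvd hsn)).mp hdvd⟩

/-- for a path `f ∈ 𝒫_{n,k,j}` with `n + j ≤ kn`, if `s` is the cardinality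
of the orbit of `f` under "rotate left k units", then `s` divides `n` and `n/s` divides `j`. -/
theorem stmt_7 (n k j : ℕ) (hn : 1 ≤ n) (hk : 2 ≤ k) (hj : 1 ≤ j)
    (hnj : n + j ≤ k * n) (f : Fin (k * n) → ℤ) (hf : IsPathPJ n k j f)
    (s : ℕ) (hs : s = Nat.card {g : Fin (k * n) → ℤ // ∃ m : ℕ, (rotL k)^[m] f = g}) :
    s ∣ n ∧ (n / s) ∣ j :=
  stmt_7_general n k j hn hk f hf s hs
end

section
/- Let a ≥ 2, c ≥ 1, d ≥ 1 and n ≥ 1 be integers with c < a and cn + d ≤ an. Then n times the number of pairs (f, i), where f : Fin(an) → ℤ has all values in {1, −1} with exactly cn+d values equal to 1 (a lattice path of cn+d upsteps and an−(cn+d) downsteps), 1 ≤ i ≤ d, and every interior a-divisible point of f lies strictly above the baseline for (f, i) (i.e. an·(S(f, m) − 2(i−1)) > m·(2−(a−2c)n) for every m with 0 < m < an and a ∣ m), equals d·C(an, cn+d). Equivalently, (d/n)·C(an, cn+d) is the number of lattice paths of cn+d upsteps and an−(cn+d) downsteps which start at (0, −2i) for some i ≥ 0 and have all interior a-divisible points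 strictly above the line through the origin of slope −((a−2c)n−2)/(an). -/
/-- The height of the path `f` at point `m`: the partial sum `S(f, m) = Σ_{t < m} f(t)`. -/
def pathSum {N : ℕ} (f : Fin N → ℤ) (m : ℕ) : ℤ :=
  ∑ t ∈ Finset.univ.filter (fun t : Fin N => (t : ℕ) < m), f t

/-- A lattice path of `c*n+d` upsteps and `a*n − (c*n+d)` downsteps: a function
`f : Fin (a*n) → ℤ` with all values in {1, −1} and exactly `c*n+d` values equal to 1. -/
def IsLatticePath (a c d n : ℕ) (f : Fin (a * n) → ℤ) : Prop :=
  (∀ t, f t = 1 ∨ f t = -1) ∧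
    (Finset.univ.filter (fun t : Fin (a * n) => f t = 1)).card = c * n + d

/-!
Write `U(x)` for the number of up-steps among the first `a x` steps of the `an`-periodic
extension of a path. With `m = a l`, the baseline condition for `(f, i)` says
`U(l) - c l ≥ i` for `0 < l < n`; for the path rotated by `a j` steps it says
`F(j + l) - F(j) ≥ i`, where `F(x) = U(x) - c x` satisfies `F(x + n) = F(x) + d`.
With the sliding minimum `M(x) = min_{x ≤ y < x + n} F(y)`, exactly `M(j + 1) - M(j)` values
of `i` work for the start `j`; over `j < n` these telescope to `M(n) - M(0) = d` (a cycle
lemma). Rotation by `a j` permutes the up-step sets of size `cn + d`, so averaging over the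
`n` rotations gives `n · #pairs = d · C(an, cn + d)`.
-/

open Finset Fin.NatCast

section WindowMin

variable (F : ℕ → ℤ) (n : ℕ) [NeZero n]

def windowMin (x : ℕ) : ℤ :=
  (range n).inf' (nonempty_range_iff.2 (NeZero.ne n)) fun l => F (x + l)

variable {F n}

theorem le_windowMin_iff {b : ℤ} {x : ℕ} : b ≤ windowMin F n x ↔ ∀ l < n, b ≤ F (x + l) := by
  simp [windowMin, le_inf'_iff]

variable {d : ℕ} (hF : ∀ x, F (x + n) = F x + d)
include hF

theorem windowMin_eq_min (x : ℕ) : windowMin F n x = min (F x) (windowMin F n (x + 1)) := by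
  refine eq_of_forall_le_iff fun b => ?_
  simp only [le_min_iff, le_windowMin_iff]
  constructor
  · intro h
    refine ⟨by simpa using h 0 (NeZero.pos n), fun l hl => ?_⟩
    rcases Nat.lt_or_ge (l + 1) n with hl' | hl'
    · simpa [add_assoc, add_comm 1] using h (l + 1) hl'
    · obtain rfl : l + 1 = n := by omega
      have := h 0 (NeZero.pos _)
      rw [add_zero] at this
      rw [add_assoc, add_comm 1, hF]
      omega
  · rintro ⟨h0, h⟩ l hl
    rcases l with _ | l
    · simpa using h0
    · simpa [add_assoc, add_comm 1] using h l (by omega)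

theorem windowMin_add_period (x : ℕ) : windowMin F n (x + n) = windowMin F n x + d := by
  refine eq_of_forall_le_iff fun b => ?_
  rw [← sub_le_iff_le_add, le_windowMin_iff, le_windowMin_iff]
  refine forall₂_congr fun l _ => ?_
  rw [add_right_comm, hF, sub_le_iff_le_add]

theorem card_filter_forall_le_eq_windowMin_sub (j : ℕ) :
    ((#((Icc 1 d).filter fun i : ℕ => ∀ l < n, 0 < l → F j + i ≤ F (j + l)) : ℕ) : ℤ) =
      windowMin F n (j + 1) - windowMin F n j := by
  have hwindow (i : ℕ) : (i ≤ d ∧ ∀ l < n, 0 < l → F j + i ≤ F (j + l)) ↔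
      F j + i ≤ windowMin F n (j + 1) := by
    rw [le_windowMin_iff]
    constructor
    · rintro ⟨hid, h⟩ l hl
      rcases Nat.lt_or_ge (l + 1) n with hl' | hl'
      · simpa [add_assoc, add_comm 1] using h (l + 1) hl' l.succ_pos
      · obtain rfl : l + 1 = n := by omega
        rw [add_assoc, add_comm 1, hF]
        omega
    · intro h
      refine ⟨?_, fun l hl hl0 => ?_⟩
      · have := h (n - 1) (by have := NeZero.pos n; omega)
        rw [add_assoc, Nat.add_sub_cancel' (NeZero.one_le), hF] at this
        omega
      · obtain ⟨l, rfl⟩ := Nat.exists_eq_add_of_lt hl0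
        simpa [add_assoc, add_comm 1] using h l (by omega)
  have hfilter : ((Icc 1 d).filter fun i : ℕ => ∀ l < n, 0 < l → F j + i ≤ F (j + l)) =
      Icc 1 (windowMin F n (j + 1) - F j).toNat := by
    ext i
    simp only [mem_filter, mem_Icc, and_assoc, hwindow]
    omega
  rw [hfilter, Nat.card_Icc, windowMin_eq_min hF j]
  omega

theorem sum_card_filter_forall_le :
    ∑ j ∈ range n, #((Icc 1 d).filter fun i : ℕ => ∀ l < n, 0 < l → F j + i ≤ F (j + l)) = d := by
  zify
  simp only [card_filter_forall_le_eq_windowMin_sub hF, sum_range_sub]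
  simpa [sub_eq_iff_eq_add'] using windowMin_add_period hF 0

end WindowMin

theorem Finset.sum_powersetCard_univ_map_equiv {α M : Type*} [Fintype α] [AddCommMonoid M]
    (e : α ≃ α) (k : ℕ) (φ : Finset α → M) :
    ∑ s ∈ powersetCard k univ, φ (s.map e.toEmbedding) = ∑ s ∈ powersetCard k univ, φ s := by
  conv_rhs => rw [← map_univ_equiv e, powersetCard_map, sum_map]
  rfl

section Paths

variable {N : ℕ}

def upSteps (f : Fin N → ℤ) : Finset (Fin N) := {t | f t = 1}

def signPath (s : Finset (Fin N)) (t : Fin N) : ℤ := if t ∈ s then 1 else -1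

theorem upSteps_signPath (s : Finset (Fin N)) : upSteps (signPath s) = s := by
  ext t; by_cases h : t ∈ s <;> simp [upSteps, signPath, h]

theorem signPath_upSteps {f : Fin N → ℤ} (hf : ∀ t, f t = 1 ∨ f t = -1) :
    signPath (upSteps f) = f := by
  ext t; rcases hf t with h | h <;> simp [upSteps, signPath, h]

theorem signPath_eq_one_or_eq_neg_one (s : Finset (Fin N)) (t : Fin N) :
    signPath s t = 1 ∨ signPath s t = -1 := by
  by_cases h : t ∈ s <;> simp [signPath, h]

theorem pathSum_eq {f : Fin N → ℤ} (hf : ∀ t, f t = 1 ∨ f t = -1) {m : ℕ} (hm : m ≤ N) :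
    pathSum f m = 2 * #{t ∈ upSteps f | t.val < m} - m := by
  have hstep (t : Fin N) : f t = 2 * (if f t = 1 then 1 else 0) - 1 := by
    rcases hf t with h | h <;> simp [h]
  rw [pathSum, sum_congr rfl fun t _ => hstep t, sum_sub_distrib, ← mul_sum, sum_boole,
    sum_const, Fin.card_filter_val_lt, min_eq_right hm, nsmul_one, filter_filter]
  congr 4
  ext t
  simp [upSteps, and_comm]

end Paths

theorem baseline_ineq_iff {a c n l i U : ℤ} (ha : 0 < a) (hl : 0 < l) (hln : l < n) :
    a * n * ((2 * U - a * l) - 2 * (i - 1)) > a * l * (2 - (a - 2 * c) * n) ↔ c * l + i ≤ U := by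
  have hdiff : a * n * ((2 * U - a * l) - 2 * (i - 1)) - a * l * (2 - (a - 2 * c) * n) =
      2 * a * (n * (U - c * l - i + 1) - l) := by ring
  have hn : 0 < n := hl.trans hln
  rw [gt_iff_lt, ← sub_pos, hdiff, mul_pos_iff_of_pos_left (by positivity), sub_pos]
  constructor
  · intro h
    by_contra! h'
    nlinarith [mul_nonpos_of_nonneg_of_nonpos hn.le (by linarith : U - c * l - i + 1 ≤ 0)]
  · intro h
    nlinarith [mul_le_mul_of_nonneg_left (by linarith : 1 ≤ U - c * l - i + 1) hn.le]

/-- The baseline condition for `(f, i)` in terms of the up-step set `s` of `f`: with `m = a l`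
and `S(f, m) = 2 #{t ∈ s | t < m} - m`, the inequality `an (S(f, m) - 2(i - 1)) > m (2 - (a - 2c) n)`
becomes `c l + i ≤ #{t ∈ s | t < a l}`. -/
def AboveBaseline {N : ℕ} (a c n : ℕ) (s : Finset (Fin N)) (i : ℕ) : Prop :=
  ∀ l < n, 0 < l → c * l + i ≤ #{t ∈ s | t.val < a * l}

instance {N : ℕ} (a c n : ℕ) (s : Finset (Fin N)) : DecidablePred (AboveBaseline a c n s) :=
  fun _ => by unfold AboveBaseline; infer_instance

theorem aboveBaseline_upSteps_iff {a c n : ℕ} (ha : 0 < a) {f : Fin (a * n) → ℤ}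
    (hf : ∀ t, f t = 1 ∨ f t = -1) (i : ℕ) :
    (∀ m : ℕ, 0 < m → m < a * n → a ∣ m →
      ((a * n : ℕ) : ℤ) * (pathSum f m - 2 * ((i : ℤ) - 1)) >
        (m : ℤ) * (2 - ((a : ℤ) - 2 * (c : ℤ)) * (n : ℤ))) ↔
      AboveBaseline a c n (upSteps f) i := by
  constructor
  · intro h l hln hl
    have hm := h (a * l) (by positivity) (Nat.mul_lt_mul_of_pos_left hln ha) (dvd_mul_right a l)
    rw [pathSum_eq hf (Nat.mul_le_mul_left a hln.le)] at hm
    push_cast at hm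
    exact_mod_cast (baseline_ineq_iff (by exact_mod_cast ha) (by exact_mod_cast hl)
      (by exact_mod_cast hln)).1 hm
  · rintro h m hm hmn ⟨l, rfl⟩
    have hl : 0 < l := Nat.pos_of_mul_pos_left hm
    have hln : l < n := Nat.lt_of_mul_lt_mul_left hmn
    rw [pathSum_eq hf (Nat.mul_le_mul_left a hln.le)]
    push_cast
    exact (baseline_ineq_iff (by exact_mod_cast ha) (by exact_mod_cast hl)
      (by exact_mod_cast hln)).2 (by exact_mod_cast h l hln hl)

theorem natCard_aboveBaseline_pairs {a c d n : ℕ} (ha : 0 < a) :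
    Nat.card {p : (Fin (a * n) → ℤ) × ℕ //
        IsLatticePath a c d n p.1 ∧ 1 ≤ p.2 ∧ p.2 ≤ d ∧
        ∀ m : ℕ, 0 < m → m < a * n → a ∣ m →
          ((a * n : ℕ) : ℤ) * (pathSum p.1 m - 2 * ((p.2 : ℤ) - 1)) >
            (m : ℤ) * (2 - ((a : ℤ) - 2 * (c : ℤ)) * (n : ℤ))} =
      ∑ s ∈ powersetCard (c * n + d) (univ : Finset (Fin (a * n))),
        #{i ∈ Icc 1 d | AboveBaseline a c n s i} := by
  let T := (powersetCard (c * n + d) univ ×ˢ Icc 1 d).filter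
    fun q : Finset (Fin (a * n)) × ℕ => AboveBaseline a c n q.1 q.2
  rw [show ∑ s ∈ powersetCard (c * n + d) univ, #{i ∈ Icc 1 d | AboveBaseline a c n s i} = #T by
    simp only [T, card_filter, sum_product], ← Nat.card_eq_finsetCard]
  refine Nat.card_congr
    { toFun := fun p => ⟨(upSteps p.1.1, p.1.2), ?_⟩
      invFun := fun q => ⟨(signPath q.1.1, q.1.2), ?_⟩
      left_inv := fun p => ?_
      right_inv := fun q => ?_ }
  · obtain ⟨⟨f, i⟩, ⟨hf, hcard⟩, hi1, hid, habove⟩ := p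
    simp only [T, mem_filter, mem_product, mem_powersetCard, mem_Icc, subset_univ, true_and]
    exact ⟨⟨hcard, hi1, hid⟩, (aboveBaseline_upSteps_iff ha hf i).1 habove⟩
  · obtain ⟨⟨s, i⟩, hq⟩ := q
    simp only [T, mem_filter, mem_product, mem_powersetCard, mem_Icc, subset_univ, true_and] at hq
    obtain ⟨⟨hcard, hi1, hid⟩, habove⟩ := hq
    refine ⟨⟨signPath_eq_one_or_eq_neg_one s, ?_⟩, hi1, hid, ?_⟩
    · exact (congrArg card (upSteps_signPath s)).trans hcard
    · rw [aboveBaseline_upSteps_iff ha (signPath_eq_one_or_eq_neg_one s), upSteps_signPath]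
      exact habove
  · exact Subtype.ext (Prod.ext (signPath_upSteps p.2.1.1) rfl)
  · exact Subtype.ext (Prod.ext (upSteps_signPath q.1.1) rfl)

section PeriodicCount

variable {N : ℕ} [NeZero N]

theorem card_filter_val_lt_eq_count (s : Finset (Fin N)) {m : ℕ} (hm : m ≤ N) :
    #{t ∈ s | t.val < m} = Nat.count (fun x : ℕ => (x : Fin N) ∈ s) m := by
  rw [Nat.count_eq_card_filter_range]
  refine card_nbij' Fin.val (fun x => (x : Fin N)) ?_ ?_ ?_ ?_ <;> intro x hx <;>
    simp only [mem_coe, mem_filter, mem_range] at hx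
  · simpa [hx.2] using hx.1
  · simpa [Nat.mod_eq_of_lt (hx.1.trans_le hm)] using hx.symm
  · simp
  · simp [Nat.mod_eq_of_lt (hx.1.trans_le hm)]

theorem count_add_period (s : Finset (Fin N)) (y : ℕ) :
    Nat.count (fun x : ℕ => (x : Fin N) ∈ s) (y + N) =
      Nat.count (fun x : ℕ => (x : Fin N) ∈ s) y + #s := by
  rw [add_comm, Nat.count_add, ← card_filter_val_lt_eq_count s le_rfl, add_comm]
  simp

theorem count_add_eq_count_map_subRight (s : Finset (Fin N)) (v m : ℕ) :
    Nat.count (fun x : ℕ => (x : Fin N) ∈ s) (v + m) =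
      Nat.count (fun x : ℕ => (x : Fin N) ∈ s) v +
        Nat.count (fun x : ℕ => (x : Fin N) ∈ s.map (Equiv.subRight (v : Fin N)).toEmbedding) m := by
  simp [Nat.count_add, add_comm]

end PeriodicCount

theorem sum_card_aboveBaseline_map_subRight {a c d n : ℕ} [NeZero n] [NeZero (a * n)]
    {s : Finset (Fin (a * n))} (hs : #s = c * n + d) :
    ∑ j ∈ range n, #{i ∈ Icc 1 d |
      AboveBaseline a c n (s.map (Equiv.subRight ((a * j : ℕ) : Fin (a * n))).toEmbedding) i} = d := by
  let F : ℕ → ℤ := fun x => Nat.count (fun y : ℕ => (y : Fin (a * n)) ∈ s) (a * x) - c * x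
  have hF (x : ℕ) : F (x + n) = F x + d := by
    simp only [F, mul_add, count_add_period, hs]
    push_cast
    ring
  refine (sum_congr rfl fun j _ => congrArg card (filter_congr fun i _ => ?_)).trans
    (sum_card_filter_forall_le hF)
  refine forall₂_congr fun l hl => imp_congr_right fun _ => ?_
  rw [card_filter_val_lt_eq_count _ (Nat.mul_le_mul_left a hl.le)]
  have hcount := count_add_eq_count_map_subRight s (a * j) (a * l)
  simp only [F, mul_add, hcount]
  push_cast
  rw [mul_add]
  omega

theorem stmt_12_general (a c d n : ℕ) (ha : 2 ≤ a) (hn : 1 ≤ n) :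
    n * Nat.card {p : (Fin (a * n) → ℤ) × ℕ //
        IsLatticePath a c d n p.1 ∧ 1 ≤ p.2 ∧ p.2 ≤ d ∧
        ∀ m : ℕ, 0 < m → m < a * n → a ∣ m →
          ((a * n : ℕ) : ℤ) * (pathSum p.1 m - 2 * ((p.2 : ℤ) - 1)) >
            (m : ℤ) * (2 - ((a : ℤ) - 2 * (c : ℤ)) * (n : ℤ))} =
      d * Nat.choose (a * n) (c * n + d) := by
  have : NeZero n := ⟨by omega⟩
  have : NeZero (a * n) := ⟨by positivity⟩
  rw [natCard_aboveBaseline_pairs (by omega)]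
  calc n * ∑ s ∈ powersetCard (c * n + d) (univ : Finset (Fin (a * n))),
          #{i ∈ Icc 1 d | AboveBaseline a c n s i}
      = ∑ j ∈ range n, ∑ s ∈ powersetCard (c * n + d) univ, #{i ∈ Icc 1 d |
          AboveBaseline a c n (s.map (Equiv.subRight ((a * j : ℕ) : Fin (a * n))).toEmbedding) i} := by
        simp only [sum_powersetCard_univ_map_equiv (Equiv.subRight _) _
          fun s => #{i ∈ Icc 1 d | AboveBaseline a c n s i}, sum_const, card_range, smul_eq_mul]
    _ = ∑ s ∈ powersetCard (c * n + d) univ, d := by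
        rw [sum_comm]
        exact sum_congr rfl fun s hs =>
          sum_card_aboveBaseline_map_subRight (mem_powersetCard.1 hs).2
    _ = d * Nat.choose (a * n) (c * n + d) := by
        simp [card_powersetCard, mul_comm]

/-- for a ≥ 2, c ≥ 1, d ≥ 1, n ≥ 1 with c < a and cn + d ≤ an,
`n` times the number of pairs `(f, i)` with `f` a lattice path of `cn+d` upsteps and
`an−(cn+d)` downsteps, `1 ≤ i ≤ d`, and every interior a-divisible point of `f`
strictly above the baseline for `(f, i)` (i.e. `an·(S(f,m) − 2(i−1)) > m·(2−(a−2c)n)`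
for every `m` with `0 < m < an` and `a ∣ m`), equals `d·C(an, cn+d)`. -/
theorem stmt_12 (a c d n : ℕ) (ha : 2 ≤ a) (hc : 1 ≤ c) (hd : 1 ≤ d) (hn : 1 ≤ n)
    (hca : c < a) (hcd : c * n + d ≤ a * n) :
    n * Nat.card {p : (Fin (a * n) → ℤ) × ℕ //
        IsLatticePath a c d n p.1 ∧ 1 ≤ p.2 ∧ p.2 ≤ d ∧
        ∀ m : ℕ, 0 < m → m < a * n → a ∣ m →
          ((a * n : ℕ) : ℤ) * (pathSum p.1 m - 2 * ((p.2 : ℤ) - 1)) >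
            (m : ℤ) * (2 - ((a : ℤ) - 2 * (c : ℤ)) * (n : ℤ))} =
      d * Nat.choose (a * n) (c * n + d) :=
  stmt_12_general a c d n ha hn
end
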